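/- Let k be a field, let (L, K, M) be a field correspondence over k, and let Ω be an algebraically closed field extension of k of transcendence degree 1. Form the full generic graph: its blue vertices are the k-algebra homomorphisms L → Ω, its red vertices are the k-algebra homomorphisms K → Ω, and its edges are the k-algebra homomorphisms e : M → Ω, the edge e joining the blue vertex e|_L and the red vertex e|_K. For a vertex v and an integer n ≥ 0, let H = B(v, n) be the full subgraph on all vertices at graph distance at most n from v, and let E_H ⊆ Ω be the subfield generated by the images of all vertices and edges of H, and E_v the image of v. Then the extension E_H / E_v is Galois. -/

import Mathlib

/-- A field extension `F/k` has transcendence degree one iff some single element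
forms a transcendence basis of `F` over `k`. -/
def HasTrdegOne (k F : Type*) [Field k] [Field F] [Algebra k F] : Prop :=
  ∃ x : F, IsTranscendenceBasis k (fun _ : Unit => x)

/-- For subfields `B ≤ E` of `Ω`, the extension `E/B` is Galois (normal and separable,
possibly infinite). -/
def IsGaloisOver {k Ω : Type*} [Field k] [Field Ω] [Algebra k Ω]
    (B E : IntermediateField k Ω) : Prop :=
  ∃ h : B ≤ E, IsGalois B (IntermediateField.extendScalars h)

section GenericGraph

variable {k M : Type*} [Field k] [Field M] [Algebra k M]
  (L K : IntermediateField k M)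
  (Ω : Type*) [Field Ω] [Algebra k Ω]

/-- The full generic graph of the correspondence `L ⊆ M ⊇ K`: the blue vertices are the
`k`-algebra homomorphisms `L → Ω`, the red vertices are the `k`-algebra homomorphisms
`K → Ω`, and a blue vertex `p` is adjacent to a red vertex `q` iff some `k`-algebra
homomorphism `e : M → Ω` (an edge) restricts to `p` on `L` and to `q` on `K`. -/
def genericGraph : SimpleGraph ((↥L →ₐ[k] Ω) ⊕ (↥K →ₐ[k] Ω)) where
  Adj v w :=
    match v, w with
    | Sum.inl p, Sum.inr q => ∃ e : M →ₐ[k] Ω, e.comp L.val = p ∧ e.comp K.val = q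
    | Sum.inr q, Sum.inl p => ∃ e : M →ₐ[k] Ω, e.comp L.val = p ∧ e.comp K.val = q
    | _, _ => False
  symm := ⟨by
    rintro (p | q) (p' | q') h <;> simp_all⟩
  loopless := ⟨by
    rintro (p | q) h <;> simp_all⟩

/-- The subfield of `Ω` attached to a vertex of the full generic graph: the image of the
corresponding homomorphism. -/
noncomputable def vertexField : ((↥L →ₐ[k] Ω) ⊕ (↥K →ₐ[k] Ω)) → IntermediateField k Ω
  | Sum.inl p => p.fieldRange
  | Sum.inr q => q.fieldRange

/-- The closed ball of radius `n` around a vertex `v` in the full generic graph. -/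
def genericBall (v : (↥L →ₐ[k] Ω) ⊕ (↥K →ₐ[k] Ω)) (n : ℕ) :
    Set ((↥L →ₐ[k] Ω) ⊕ (↥K →ₐ[k] Ω)) :=
  {w | (genericGraph L K Ω).Reachable v w ∧ (genericGraph L K Ω).dist v w ≤ n}

/-- The subfield `E_H ⊆ Ω` generated by the images of all vertices and all edges of the
full subgraph `H = B(v, n)` of the full generic graph. -/
noncomputable def ballField (v : (↥L →ₐ[k] Ω) ⊕ (↥K →ₐ[k] Ω)) (n : ℕ) :
    IntermediateField k Ω :=
  (⨆ w : (genericBall L K Ω v n), vertexField L K Ω w.1) ⊔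
  (⨆ e : {e : M →ₐ[k] Ω //
      Sum.inl (e.comp L.val) ∈ genericBall L K Ω v n ∧
      Sum.inr (e.comp K.val) ∈ genericBall L K Ω v n},
    (e.1).fieldRange)

end GenericGraph

/-!
Since `M` is algebraic over `L` and over `K`, the field `E_v` contains an element transcendental
over `k`; as `Ω` has transcendence degree one, `Ω` is then an algebraic closure of `E_v`.
Separability propagates along edges: `e(M)` is separable over both `e(L)` and `e(K)`, so the
fields of all vertices and edges reachable from `v` lie in the separable closure of `E_v`.
For normality, an `E_v`-endomorphism `σ` of `Ω` acts on the generic graph by composition; it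
fixes `v`, hence maps the ball `B(v, n)` into itself, and so `σ(E_H) ≤ E_H`.
-/

section Transcendence

variable {k F : Type*} [Field k] [Field F] [Algebra k F]

theorem Algebra.Transcendental.tower_bot_of_isAlgebraic (E : Type*) [Field E] [Algebra k E]
    [Algebra E F] [IsScalarTower k E F] [Algebra.IsAlgebraic E F] [Algebra.Transcendental k F] :
    Algebra.Transcendental k E :=
  Algebra.transcendental_iff_not_isAlgebraic.2 fun _ =>
    Algebra.transcendental_iff_not_isAlgebraic.1 ‹_› (Algebra.IsAlgebraic.trans k E F)

theorem HasTrdegOne.transcendental (h : HasTrdegOne k F) : Algebra.Transcendental k F :=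
  let ⟨x, hx⟩ := h
  Algebra.transcendental_def.2 ⟨x, algebraicIndependent_unique_type_iff.1 hx.1⟩

theorem HasTrdegOne.isTranscendenceBasis (h : HasTrdegOne k F) {x : F}
    (hx : Transcendental k x) : IsTranscendenceBasis k (fun _ : Unit => x) :=
  let ⟨_, hy⟩ := h
  (algebraicIndependent_unique_type_iff.2 hx).isTranscendenceBasis_of_lift_trdeg_le_of_finite
    hy.lift_cardinalMk_eq_trdeg.ge

theorem HasTrdegOne.isAlgebraic_of_transcendental_mem (h : HasTrdegOne k F)
    {E : IntermediateField k F} {x : F} (hx : Transcendental k x) (hxE : x ∈ E) :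
    Algebra.IsAlgebraic E F :=
  (h.isTranscendenceBasis hx).isAlgebraic_iff.2 fun _ => isAlgebraic_algebraMap (⟨x, hxE⟩ : E)

end Transcendence

theorem IsSeparable.ringHom_of_comp_eq {L M S Ω : Type*} [Field L] [Field M] [Field S] [Field Ω]
    [Algebra L M] [Algebra S Ω] (f : L →+* S) (g : M →+* Ω)
    (h : (algebraMap S Ω).comp f = g.comp (algebraMap L M)) {m : M} (hm : IsSeparable L m) :
    IsSeparable S (g m) := by
  have hroot : Polynomial.aeval (g m) ((minpoly L m).map f) = 0 := by
    rw [Polynomial.aeval_def, Polynomial.eval₂_map, h, ← Polynomial.hom_eval₂,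
      ← Polynomial.aeval_def, minpoly.aeval, map_zero]
  exact (Polynomial.Separable.map hm).of_dvd (minpoly.dvd S _ hroot)

theorem map_mem_separableClosure_of_isSeparable {L M F Ω : Type*} [Field L] [Field M] [Field F]
    [Field Ω] [Algebra L M] [Algebra.IsSeparable L M] [Algebra F Ω] (e : M →+* Ω)
    (h : ∀ l : L, e (algebraMap L M l) ∈ separableClosure F Ω) (m : M) :
    e m ∈ separableClosure F Ω := by
  let S := separableClosure F Ω
  let f : L →+* S := (e.comp (algebraMap L M)).codRestrict S h
  have hsep : IsSeparable S (e m) :=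
    (Algebra.IsSeparable.isSeparable L m).ringHom_of_comp_eq f e rfl
  exact mem_separableClosure_iff.2 (hsep.of_algebra_isSeparable_of_isSeparable F)

theorem SimpleGraph.Reachable.dist_map_le {V W : Type*} {G : SimpleGraph V} {G' : SimpleGraph W}
    (f : G →g G') {u v : V} (h : G.Reachable u v) : G'.dist (f u) (f v) ≤ G.dist u v := by
  obtain ⟨p, hp⟩ := h.exists_walk_length_eq_dist
  exact hp ▸ p.length_map f ▸ SimpleGraph.dist_le (p.map f)

namespace AlgHom

variable {k M Ω : Type*} [Field k] [Field M] [Field Ω] [Algebra k M] [Algebra k Ω]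

theorem exists_transcendental_mem_fieldRange [Algebra.Transcendental k M] (p : M →ₐ[k] Ω) :
    ∃ ω ∈ p.fieldRange, Transcendental k ω :=
  let ⟨y, hy⟩ := Algebra.transcendental_def.1 ‹_›
  ⟨p y, ⟨y, rfl⟩, mt (isAlgebraic_algHom_iff p p.injective).1 hy⟩

theorem fieldRange_comp_val_le (e : M →ₐ[k] Ω) (L : IntermediateField k M) :
    (e.comp L.val).fieldRange ≤ e.fieldRange := by
  rintro _ ⟨l, rfl⟩
  exact ⟨l, rfl⟩

theorem fieldRange_le_separableClosure_of_comp_val {F : Type*} [Field F] [Algebra k F]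
    [Algebra F Ω] [IsScalarTower k F Ω] (e : M →ₐ[k] Ω) (L : IntermediateField k M)
    [Algebra.IsSeparable L M]
    (h : (e.comp L.val).fieldRange ≤ (separableClosure F Ω).restrictScalars k) :
    e.fieldRange ≤ (separableClosure F Ω).restrictScalars k := by
  rintro _ ⟨m, rfl⟩
  exact map_mem_separableClosure_of_isSeparable e.toRingHom (fun l => h ⟨l, rfl⟩) m

end AlgHom

section GenericGraph

variable {k M : Type*} [Field k] [Field M] [Algebra k M]
  (L K : IntermediateField k M)
  (Ω : Type*) [Field Ω] [Algebra k Ω]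

theorem exists_transcendental_mem_vertexField [Algebra.IsAlgebraic L M] [Algebra.IsAlgebraic K M]
    [Algebra.Transcendental k M] (v : (↥L →ₐ[k] Ω) ⊕ (↥K →ₐ[k] Ω)) :
    ∃ ω ∈ vertexField L K Ω v, Transcendental k ω := by
  have : Algebra.Transcendental k L := .tower_bot_of_isAlgebraic (F := M) L
  have : Algebra.Transcendental k K := .tower_bot_of_isAlgebraic (F := M) K
  cases v with
  | inl p => exact p.exists_transcendental_mem_fieldRange
  | inr q => exact q.exists_transcendental_mem_fieldRange

theorem mem_genericBall_self (v : (↥L →ₐ[k] Ω) ⊕ (↥K →ₐ[k] Ω)) (n : ℕ) :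
    v ∈ genericBall L K Ω v n :=
  ⟨.refl v, by simp⟩

theorem vertexField_le_ballField (v : (↥L →ₐ[k] Ω) ⊕ (↥K →ₐ[k] Ω)) (n : ℕ) :
    vertexField L K Ω v ≤ ballField L K Ω v n :=
  le_sup_of_le_left <| le_iSup (fun w : genericBall L K Ω v n => vertexField L K Ω w.1)
    ⟨v, mem_genericBall_self L K Ω v n⟩

section Separability

variable {L K Ω} {F : Type*} [Field F] [Algebra k F] [Algebra F Ω] [IsScalarTower k F Ω]
  [Algebra.IsSeparable L M] [Algebra.IsSeparable K M]

theorem vertexField_le_separableClosure_of_adj {a b : (↥L →ₐ[k] Ω) ⊕ (↥K →ₐ[k] Ω)}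
    (hab : (genericGraph L K Ω).Adj a b)
    (ha : vertexField L K Ω a ≤ (separableClosure F Ω).restrictScalars k) :
    vertexField L K Ω b ≤ (separableClosure F Ω).restrictScalars k := by
  rcases a with p | q <;> rcases b with p' | q'
  · exact hab.elim
  · obtain ⟨e, rfl, rfl⟩ := hab
    exact (e.fieldRange_comp_val_le K).trans (e.fieldRange_le_separableClosure_of_comp_val L ha)
  · obtain ⟨e, rfl, rfl⟩ := hab
    exact (e.fieldRange_comp_val_le L).trans (e.fieldRange_le_separableClosure_of_comp_val K ha)
  · exact hab.elim

theorem vertexField_le_separableClosure_of_reachable {a b : (↥L →ₐ[k] Ω) ⊕ (↥K →ₐ[k] Ω)}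
    (hab : (genericGraph L K Ω).Reachable a b)
    (ha : vertexField L K Ω a ≤ (separableClosure F Ω).restrictScalars k) :
    vertexField L K Ω b ≤ (separableClosure F Ω).restrictScalars k := by
  rw [SimpleGraph.reachable_iff_reflTransGen] at hab
  induction hab with
  | refl => exact ha
  | tail _ hcd ih => exact vertexField_le_separableClosure_of_adj hcd ih

theorem ballField_le_separableClosure (v : (↥L →ₐ[k] Ω) ⊕ (↥K →ₐ[k] Ω)) (n : ℕ) :
    ballField L K Ω v n ≤ (separableClosure (vertexField L K Ω v) Ω).restrictScalars k := by
  have hv : vertexField L K Ω v ≤ (separableClosure (vertexField L K Ω v) Ω).restrictScalars k :=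
    fun x hx => mem_separableClosure_iff.2 (isSeparable_algebraMap (⟨x, hx⟩ : vertexField L K Ω v))
  refine sup_le (iSup_le fun ⟨w, hw⟩ => ?_) (iSup_le fun ⟨e, he, _⟩ => ?_)
  · exact vertexField_le_separableClosure_of_reachable hw.1 hv
  · exact e.fieldRange_le_separableClosure_of_comp_val L
      (vertexField_le_separableClosure_of_reachable he.1 hv)

end Separability

section Normality

variable (σ : Ω →ₐ[k] Ω)

def genericGraphHom : genericGraph L K Ω →g genericGraph L K Ω where
  toFun := Sum.map (σ.comp ·) (σ.comp ·)
  map_rel' {a b} hab := by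
    rcases a with p | q <;> rcases b with p' | q'
    · exact hab.elim
    · obtain ⟨e, rfl, rfl⟩ := hab
      exact ⟨σ.comp e, rfl, rfl⟩
    · obtain ⟨e, rfl, rfl⟩ := hab
      exact ⟨σ.comp e, rfl, rfl⟩
    · exact hab.elim

theorem vertexField_genericGraphHom (w : (↥L →ₐ[k] Ω) ⊕ (↥K →ₐ[k] Ω)) :
    vertexField L K Ω (genericGraphHom L K Ω σ w) = (vertexField L K Ω w).map σ := by
  cases w <;> exact (AlgHom.map_fieldRange _ _).symm

variable {v : (↥L →ₐ[k] Ω) ⊕ (↥K →ₐ[k] Ω)} (hσ : ∀ x ∈ vertexField L K Ω v, σ x = x)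
include hσ

theorem genericGraphHom_apply_eq_self : genericGraphHom L K Ω σ v = v := by
  cases v with
  | inl p => exact congrArg Sum.inl (AlgHom.ext fun y => hσ _ ⟨y, rfl⟩)
  | inr q => exact congrArg Sum.inr (AlgHom.ext fun y => hσ _ ⟨y, rfl⟩)

theorem genericGraphHom_mem_genericBall {n : ℕ} {w : (↥L →ₐ[k] Ω) ⊕ (↥K →ₐ[k] Ω)}
    (hw : w ∈ genericBall L K Ω v n) : genericGraphHom L K Ω σ w ∈ genericBall L K Ω v n := by
  have hfix := genericGraphHom_apply_eq_self L K Ω σ hσ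
  refine ⟨hfix ▸ hw.1.map (genericGraphHom L K Ω σ), ?_⟩
  calc (genericGraph L K Ω).dist v (genericGraphHom L K Ω σ w)
      = (genericGraph L K Ω).dist (genericGraphHom L K Ω σ v) (genericGraphHom L K Ω σ w) := by
        rw [hfix]
    _ ≤ (genericGraph L K Ω).dist v w := hw.1.dist_map_le _
    _ ≤ n := hw.2

theorem map_ballField_le (n : ℕ) : (ballField L K Ω v n).map σ ≤ ballField L K Ω v n := by
  rw [ballField, IntermediateField.map_sup, IntermediateField.map_iSup, IntermediateField.map_iSup]
  refine sup_le_sup (iSup_le fun ⟨w, hw⟩ => ?_) (iSup_le fun ⟨e, he⟩ => ?_)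
  · rw [← vertexField_genericGraphHom]
    exact le_iSup (fun w : genericBall L K Ω v n => vertexField L K Ω w.1)
      ⟨_, genericGraphHom_mem_genericBall L K Ω σ hσ hw⟩
  · rw [AlgHom.map_fieldRange]
    exact le_iSup (fun e : {e : M →ₐ[k] Ω // Sum.inl (e.comp L.val) ∈ genericBall L K Ω v n ∧
        Sum.inr (e.comp K.val) ∈ genericBall L K Ω v n} => e.1.fieldRange)
      ⟨σ.comp e, genericGraphHom_mem_genericBall L K Ω σ hσ he.1,
        genericGraphHom_mem_genericBall L K Ω σ hσ he.2⟩

end Normality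

end GenericGraph

theorem ballField_isGaloisOver_vertexField
    (k M : Type*) [Field k] [Field M] [Algebra k M]
    -- `M` is a finitely generated field extension of `k` of transcendence degree 1
    (htr : HasTrdegOne k M)
    -- the two intermediate fields `L` and `K`, with `M/L` and `M/K` finite and separable
    (L K : IntermediateField k M)
    [FiniteDimensional L M] [FiniteDimensional K M]
    [Algebra.IsSeparable L M] [Algebra.IsSeparable K M]
    -- an algebraically closed extension `Ω` of `k` of transcendence degree 1
    (Ω : Type*) [Field Ω] [Algebra k Ω] [IsAlgClosed Ω]
    (htrΩ : HasTrdegOne k Ω)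
    -- a vertex of the full generic graph and a radius
    (v : (↥L →ₐ[k] Ω) ⊕ (↥K →ₐ[k] Ω)) (n : ℕ) :
    IsGaloisOver (vertexField L K Ω v) (ballField L K Ω v n) := by
  have := htr.transcendental
  obtain ⟨ω, hωv, hω⟩ := exists_transcendental_mem_vertexField L K Ω v
  have : Algebra.IsAlgebraic (vertexField L K Ω v) Ω :=
    htrΩ.isAlgebraic_of_transcendental_mem hω hωv
  have : IsAlgClosure (vertexField L K Ω v) Ω := ⟨‹_›, ‹_›⟩
  have hle := vertexField_le_ballField L K Ω v n
  refine ⟨hle, isGalois_iff.2 ⟨?_, ?_⟩⟩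
  · exact (le_separableClosure_iff _ Ω _).1 (ballField_le_separableClosure v n)
  · rw [IntermediateField.normal_iff_forall_map_le]
    rintro σ _ ⟨y, hy, rfl⟩
    exact map_ballField_le L K Ω (σ.restrictScalars k) (fun x hx => σ.commutes ⟨x, hx⟩) n
      ⟨y, hy, rfl⟩
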